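/- arXiv:1901.05757 — 2 statements merged into one kernel-verified Lean document; each statement's English description precedes it below -/
import Mathlib

section
/- The set of observable nodes is generic: fix N, a zero-pattern E ⊆ {1,…,N} × {1,…,N} for the matrix A, and a sensor matrix C ∈ ℝ^{P×N} whose rows are standard basis vectors. For a parameter vector w : E → ℝ let A(w) be the matrix whose (i,j)-entry is w(i,j) if (i,j) ∈ E and 0 otherwise. Then there exist a set 𝒪* ⊆ {1,…,N} and a set Z ⊆ ℝ^E of Lebesgue measure zero such that for every w ∉ Z, the set of observable nodes of the pair (A(w), C), namely { i : e_i lies in the row space of the observability matrix [C; CA(w); …; CA(w)^{N-1}] }, equals 𝒪*. -/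
/-!
The entries of `O(A(w), C)` are polynomials in the free parameters `w`. A family of rows is
linearly independent iff its Gram determinant, again a polynomial in `w`, is nonzero, and a
nonzero real polynomial vanishes only on a Lebesgue-null set (Fubini, by induction on the number
of variables). Off the union of these finitely many null sets, each Gram determinant vanishes
exactly when it vanishes as a polynomial, so the independence pattern of the rows does not depend
on `w`, and neither do the ranks of `O(A(w), C)` and of `O(A(w), C)` with `eᵢ` appended. Node `i`
is observable iff these two ranks agree.
-/

open Matrix

/-- The observability matrix `O(A,C) = [C; CA; CA²; …; CA^{N-1}]`, with the row indexed by
`(k, p)` equal to the `p`-th row of `C * A^k`. -/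
def obsMat (N P : ℕ) (A : Matrix (Fin N) (Fin N) ℝ) (C : Matrix (Fin P) (Fin N) ℝ) :
    Matrix (Fin N × Fin P) (Fin N) ℝ :=
  fun kp j => (C * A ^ (kp.1 : ℕ)) kp.2 j

/-- The structured matrix with zero-pattern `E` and free entries given by `w : E → ℝ`. -/
def structMat (N : ℕ) (E : Finset (Fin N × Fin N)) (w : E → ℝ) :
    Matrix (Fin N) (Fin N) ℝ :=
  fun a b => if h : (a, b) ∈ E then w ⟨(a, b), h⟩ else 0

open MeasureTheory MvPolynomial Set Submodule Module

namespace MvPolynomial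

theorem ae_eval_ne_zero_of_fin :
    ∀ {n : ℕ} {p : MvPolynomial (Fin n) ℝ}, p ≠ 0 → ∀ᵐ x : Fin n → ℝ, eval x p ≠ 0
  | 0, p, hp => .of_forall fun x => by
    rw [eq_C_of_isEmpty p, eval_C]
    exact fun h => hp (by rw [eq_C_of_isEmpty p, h, C_0])
  | n + 1, p, hp => by
    set Q := finSuccEquiv ℝ n p
    have hQ : Q ≠ 0 := (map_ne_zero_iff _ (finSuccEquiv ℝ n).injective).2 hp
    -- `Q` is `p` as a polynomial in the first variable; where its leading coefficient does not
    -- vanish at `y`, `t ↦ p (t, y)` has finitely many roots.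
    have hslice : ∀ᵐ y : Fin n → ℝ, volume {t : ℝ | eval (Fin.cons t y) p = 0} = 0 := by
      filter_upwards [ae_eval_ne_zero_of_fin (Polynomial.leadingCoeff_ne_zero.2 hQ)] with y hy
      have hQy : Q.map (eval y) ≠ 0 := fun h => hy <| by
        rw [Polynomial.leadingCoeff, ← Polynomial.coeff_map, h, Polynomial.coeff_zero]
      simp only [eval_eq_eval_mv_eval']
      exact (Polynomial.finite_setOfPred_isRoot hQy).measure_zero _
    have hmeas : MeasurableSet {x : Fin (n + 1) → ℝ | eval x p = 0} :=
      (isClosed_singleton.preimage (continuous_eval p)).measurableSet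
    rw [ae_iff]
    simp only [not_not]
    rw [← (volume_preserving_piFinSuccAbove (fun _ => ℝ) 0).symm.measure_preimage
      hmeas.nullMeasurableSet, Measure.volume_eq_prod,
      Measure.prod_apply_symm (hmeas.preimage (MeasurableEquiv.measurable _))]
    simpa [Fin.insertNthEquiv, Fin.insertNth_zero'] using lintegral_congr_ae hslice

variable {σ : Type*} [Fintype σ]

theorem ae_eval_ne_zero {p : MvPolynomial σ ℝ} (hp : p ≠ 0) : ∀ᵐ x : σ → ℝ, eval x p ≠ 0 := by
  let e := Fintype.equivFin σ
  have hq : rename e p ≠ 0 := (map_ne_zero_iff _ (rename_injective _ e.injective)).2 hp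
  have := (volume_preserving_arrowCongr' e (MeasurableEquiv.refl ℝ)
    (.id volume)).quasiMeasurePreserving.ae (ae_eval_ne_zero_of_fin hq)
  simpa [eval_rename, MeasurableEquiv.arrowCongr', Equiv.arrowCongr', Function.comp_def] using this

theorem ae_eval_eq_zero_iff (p : MvPolynomial σ ℝ) : ∀ᵐ x : σ → ℝ, eval x p = 0 ↔ p = 0 := by
  by_cases hp : p = 0
  · simp [hp]
  · filter_upwards [ae_eval_ne_zero hp] with x hx
    simp [hx, hp]

end MvPolynomial

section LinearIndependence

variable {K V W ι : Type*} [DivisionRing K] [AddCommGroup V] [Module K V] [AddCommGroup W]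
  [Module K W] [Finite ι]

theorem finrank_span_range_le_of_linearIndepOn_imp {f : ι → V} {g : ι → W}
    (h : ∀ s : Set ι, LinearIndepOn K f s → LinearIndepOn K g s) :
    finrank K (span K (range f)) ≤ finrank K (span K (range g)) := by
  obtain ⟨b, -, -, hspan, hb⟩ :=
    exists_linearIndepOn_extension (linearIndepOn_empty K f) (empty_subset univ)
  have : Fintype b := Fintype.ofFinite b
  have : FiniteDimensional K (span K (range g)) :=
    FiniteDimensional.span_of_finite K (finite_range g)
  have hfb : span K (range f) = span K (f '' b) :=
    le_antisymm (span_le.2 (by simpa using hspan)) (span_mono (image_subset_range _ _))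
  calc finrank K (span K (range f)) = Fintype.card b := by
        rw [hfb, image_eq_range, finrank_span_eq_card hb]
    _ = finrank K (span K (g '' b)) := by rw [image_eq_range, finrank_span_eq_card (h b hb)]
    _ ≤ finrank K (span K (range g)) := Submodule.finrank_mono (span_mono (image_subset_range _ _))

theorem finrank_span_range_eq_of_linearIndepOn_iff {f : ι → V} {g : ι → W}
    (h : ∀ s : Set ι, LinearIndepOn K f s ↔ LinearIndepOn K g s) :
    finrank K (span K (range f)) = finrank K (span K (range g)) :=
  le_antisymm (finrank_span_range_le_of_linearIndepOn_imp fun s => (h s).1)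
    (finrank_span_range_le_of_linearIndepOn_imp fun s => (h s).2)

end LinearIndependence

namespace Matrix

theorem linearIndependent_row_iff_det_mul_transpose_ne_zero {K m n : Type*} [Field K]
    [LinearOrder K] [IsStrictOrderedRing K] [Fintype m] [DecidableEq m] [Fintype n]
    (A : Matrix m n K) : LinearIndependent K A.row ↔ (A * Aᵀ).det ≠ 0 := by
  rw [← isUnit_iff_ne_zero, ← isUnit_iff_isUnit_det, ← linearIndependent_rows_iff_isUnit,
    linearIndependent_iff_card_eq_finrank_span, linearIndependent_iff_card_eq_finrank_span,
    Set.finrank, Set.finrank,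
    ← rank_eq_finrank_span_row, ← rank_eq_finrank_span_row, rank_self_mul_transpose]

theorem mem_span_range_row_iff_rank_fromRows_eq {K m n : Type*} [Field K] [Finite m]
    [Fintype n] (A : Matrix m n K) (u : n → K) :
    u ∈ span K (range A.row) ↔ (A.fromRows (replicateRow Unit u)).rank = A.rank := by
  have hspan : span K (range (A.fromRows (replicateRow Unit u)).row) =
      span K (insert u (range A.row)) := by
    show span K (range (Sum.elim A.row fun _ : Unit => u)) = _
    rw [Sum.elim_range, range_const, union_singleton]
  rw [rank_eq_finrank_span_row, rank_eq_finrank_span_row, hspan]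
  constructor
  · intro hu
    rw [span_insert_eq_span hu]
  · intro h
    rw [eq_of_le_of_finrank_eq (span_mono (subset_insert _ _)) h.symm]
    exact subset_span (mem_insert _ _)

variable {σ m n : Type*} [Fintype σ] [Fintype m] [Fintype n]

theorem exists_ae_rank_map_eval_eq (A : Matrix m n (MvPolynomial σ ℝ)) :
    ∃ r : ℕ, ∀ᵐ x : σ → ℝ, (A.map (eval x)).rank = r := by
  classical
  let gram (s : Set m) : MvPolynomial σ ℝ :=
    (A.submatrix (↑) id * (A.submatrix ((↑) : s → m) id)ᵀ).det
  have hgram (x : σ → ℝ) (s : Set m) :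
      LinearIndepOn ℝ (A.map (eval x)).row s ↔ eval x (gram s) ≠ 0 := by
    rw [RingHom.map_det, RingHom.mapMatrix_apply, Matrix.map_mul, transpose_map,
      ← submatrix_map]
    exact linearIndependent_row_iff_det_mul_transpose_ne_zero _
  have hgood : ∀ᵐ x : σ → ℝ, ∀ s, eval x (gram s) = 0 ↔ gram s = 0 :=
    ae_all_iff.2 fun s => ae_eval_eq_zero_iff (gram s)
  obtain ⟨x₀, hx₀⟩ := hgood.exists
  refine ⟨(A.map (eval x₀)).rank, hgood.mono fun x hx => ?_⟩
  rw [rank_eq_finrank_span_row, rank_eq_finrank_span_row]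
  exact finrank_span_range_eq_of_linearIndepOn_iff fun s => by simp only [hgram, ne_eq, hx, hx₀]

theorem exists_ae_mem_span_row_map_eval_iff (A : Matrix m n (MvPolynomial σ ℝ))
    (u : n → MvPolynomial σ ℝ) :
    ∃ b : Prop, ∀ᵐ x : σ → ℝ, eval x ∘ u ∈ span ℝ (range (A.map (eval x)).row) ↔ b := by
  obtain ⟨r, hr⟩ := (A.fromRows (replicateRow Unit u)).exists_ae_rank_map_eval_eq
  obtain ⟨r₀, hr₀⟩ := A.exists_ae_rank_map_eval_eq
  refine ⟨r = r₀, ?_⟩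
  filter_upwards [hr, hr₀] with x hx hx₀
  rw [mem_span_range_row_iff_rank_fromRows_eq, ← hx, ← hx₀, fromRows_map]
  rfl

end Matrix

noncomputable def structMatPoly (N : ℕ) (E : Finset (Fin N × Fin N)) :
    Matrix (Fin N) (Fin N) (MvPolynomial E ℝ) :=
  fun a b => if h : (a, b) ∈ E then X ⟨(a, b), h⟩ else 0

noncomputable def obsMatPoly (N P : ℕ) (E : Finset (Fin N × Fin N)) (C : Matrix (Fin P) (Fin N) ℝ) :
    Matrix (Fin N × Fin P) (Fin N) (MvPolynomial E ℝ) :=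
  of fun kp => (C.map (algebraMap ℝ (MvPolynomial E ℝ)) * structMatPoly N E ^ (kp.1 : ℕ)) kp.2

theorem structMatPoly_map_eval (N : ℕ) (E : Finset (Fin N × Fin N)) (w : E → ℝ) :
    (structMatPoly N E).map (eval w) = structMat N E w := by
  ext a b
  by_cases h : (a, b) ∈ E <;> simp [structMatPoly, structMat, h]

theorem obsMatPoly_map_eval (N P : ℕ) (E : Finset (Fin N × Fin N)) (C : Matrix (Fin P) (Fin N) ℝ)
    (w : E → ℝ) : (obsMatPoly N P E C).map (eval w) = obsMat N P (structMat N E w) C := by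
  ext ⟨k, p⟩ j
  have : (C.map (algebraMap ℝ (MvPolynomial E ℝ)) * structMatPoly N E ^ (k : ℕ)).map (eval w) =
      C * structMat N E w ^ (k : ℕ) := by
    rw [Matrix.map_mul, Matrix.map_pow, structMatPoly_map_eval, Matrix.map_map]
    simp [Function.comp_def]
  exact congrFun (congrFun this p) j

theorem stmt_6_general (N P : ℕ) (E : Finset (Fin N × Fin N)) (C : Matrix (Fin P) (Fin N) ℝ) :
    ∃ (Ostar : Set (Fin N)) (Z : Set (E → ℝ)),
      MeasureTheory.volume Z = 0 ∧
      ∀ w : E → ℝ, w ∉ Z →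
        {i : Fin N |
          Pi.single i (1 : ℝ) ∈
            Submodule.span ℝ (Set.range (obsMat N P (structMat N E w) C))} = Ostar := by
  have hgeneric (i : Fin N) : ∃ b : Prop, ∀ᵐ w : E → ℝ,
      Pi.single i (1 : ℝ) ∈ span ℝ (range (obsMat N P (structMat N E w) C)) ↔ b := by
    obtain ⟨b, hb⟩ := (obsMatPoly N P E C).exists_ae_mem_span_row_map_eval_iff (Pi.single i 1)
    refine ⟨b, hb.mono fun w hw => ?_⟩
    have hsingle : eval w ∘ Pi.single i 1 = Pi.single i (1 : ℝ) := by
      ext j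
      simp [Pi.single_apply, apply_ite]
    rwa [obsMatPoly_map_eval, hsingle] at hw
  choose b hb using hgeneric
  refine ⟨{i | b i}, {w | ¬ ∀ i, _ ↔ b i}, ae_iff.1 (ae_all_iff.2 hb), fun w hw => ?_⟩
  ext i
  exact (not_not.1 hw) i

/-- Genericity of the set of observable nodes: for a fixed zero-pattern `E` of `A` and a fixed
sensor matrix `C` whose rows are standard basis vectors, there are a set `𝒪*` of nodes and a
Lebesgue-null set `Z ⊆ ℝ^E` such that for every parameter vector `w ∉ Z` the set of observable
nodes of `(A(w), C)` equals `𝒪*`. -/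
theorem stmt_6 (N P : ℕ) (E : Finset (Fin N × Fin N)) (C : Matrix (Fin P) (Fin N) ℝ)
    (hC : ∀ p : Fin P, ∃ j : Fin N, C p = Pi.single j 1) :
    ∃ (Ostar : Set (Fin N)) (Z : Set (E → ℝ)),
      MeasureTheory.volume Z = 0 ∧
      ∀ w : E → ℝ, w ∉ Z →
        {i : Fin N |
          Pi.single i (1 : ℝ) ∈
            Submodule.span ℝ (Set.range (obsMat N P (structMat N E w) C))} = Ostar :=
  stmt_6_general N P E C
end

section
/- Consider the 8-node network with A the 8×8 real matrix with nonzero entries a₁₅ = 3, a₁₈ = 7, a₃₃ = 2, a₄₂ = 8, a₅₃ = 1, a₅₄ = 1, a₈₆ = 5, a₈₇ = 4, a₈₈ = 1 (all other entries zero) and C = e₁ᵀ ∈ ℝ^{1×8}. Then the observability matrix O(A,C) = [C; CA; …; CA⁷] has rank 6, while the set of indices i such that the standard basis vector e_i lies in the row space of O(A,C) is exactly {1, 2, 3, 4}; hence the network has exactly four observable nodes. -/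
open Matrix

/-- The 8-node example network of the paper. -/
def Aex : Matrix (Fin 8) (Fin 8) ℝ :=
  !![0, 0, 0, 0, 3, 0, 0, 7;
     0, 0, 0, 0, 0, 0, 0, 0;
     0, 0, 2, 0, 0, 0, 0, 0;
     0, 8, 0, 0, 0, 0, 0, 0;
     0, 0, 1, 1, 0, 0, 0, 0;
     0, 0, 0, 0, 0, 0, 0, 0;
     0, 0, 0, 0, 0, 0, 0, 0;
     0, 0, 0, 0, 0, 5, 4, 1]

/-- The sensor matrix `C = e₁ᵀ` of the example. -/
def Cex : Matrix (Fin 1) (Fin 8) ℝ :=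
  !![1, 0, 0, 0, 0, 0, 0, 0]

namespace Matrix

variable {K : Type*} [CommSemiring K] {l m n : Type*} [Fintype m]

theorem span_range_row_mul_le (M : Matrix l m K) (B : Matrix m n K) :
    Submodule.span K (Set.range (M * B).row) ≤ Submodule.span K (Set.range B.row) := by
  rw [Submodule.span_le, ← range_vecMulLinear]
  rintro _ ⟨i, rfl⟩
  exact ⟨M i, (mul_apply_eq_vecMul M B i).symm⟩

theorem span_range_row_eq_of_mul_eq [Fintype l] {A : Matrix l n K} {B : Matrix m n K}
    {M : Matrix l m K} {S : Matrix m l K} (hA : A = M * B) (hB : B = S * A) :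
    Submodule.span K (Set.range A.row) = Submodule.span K (Set.range B.row) :=
  le_antisymm (hA ▸ span_range_row_mul_le M B) (hB ▸ span_range_row_mul_le S A)

theorem rank_eq_card_of_mul_eq_one [StrongRankCondition K] [Fintype n] [DecidableEq m]
    {B : Matrix m n K} {R : Matrix n m K} (h : B * R = 1) : B.rank = Fintype.card m :=
  le_antisymm B.rank_le_card_height (by simpa [h] using B.rank_mul_le_left R)

theorem dotProduct_eq_zero_of_mem_span_range_row [Fintype n] {B : Matrix m n K} {x c : n → K}
    (hx : x ∈ Submodule.span K (Set.range B.row)) (hc : B *ᵥ c = 0) : x ⬝ᵥ c = 0 := by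
  rw [← range_vecMulLinear] at hx
  obtain ⟨y, rfl⟩ := hx
  rw [vecMulLinear_apply, ← dotProduct_mulVec, hc, dotProduct_zero]

theorem single_one_notMem_span_range_row [Fintype n] [DecidableEq n] {B : Matrix m n K}
    {c : n → K} {i : n} (hc : B *ᵥ c = 0) (hi : c i ≠ 0) :
    Pi.single i 1 ∉ Submodule.span K (Set.range B.row) := fun h =>
  hi (by simpa [single_one_dotProduct] using dotProduct_eq_zero_of_mem_span_range_row h hc)

theorem vecMul_pow_eq_of_vecMul_eq {R ι : Type*} [Semiring R] [Fintype ι] [DecidableEq ι]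
    {N : ℕ} (A : Matrix ι ι R) (r : Fin (N + 1) → ι → R)
    (hr : ∀ k : Fin N, r k.castSucc ᵥ* A = r k.succ) (k : Fin (N + 1)) :
    r 0 ᵥ* A ^ (k : ℕ) = r k := by
  induction k using Fin.induction with
  | zero => simp
  | succ k ih => rw [Fin.val_succ, pow_succ, ← vecMul_vecMul, ← Fin.val_castSucc, ih, hr]

end Matrix

theorem range_row_obsMat_fin_one (N : ℕ) (A : Matrix (Fin N) (Fin N) ℝ)
    (C : Matrix (Fin 1) (Fin N) ℝ) :
    Set.range (obsMat N 1 A C).row = Set.range fun k : Fin N => C 0 ᵥ* A ^ (k : ℕ) := by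
  ext v
  constructor
  · rintro ⟨⟨k, p⟩, rfl⟩
    exact ⟨k, by rw [Subsingleton.elim p 0]; exact (mul_apply_eq_vecMul _ _ _).symm⟩
  · rintro ⟨k, rfl⟩
    exact ⟨(k, 0), mul_apply_eq_vecMul _ _ _⟩

/-- Row `k` is `e₁ᵀ Aexᵏ`. -/
def Oex : Matrix (Fin 8) (Fin 8) ℝ :=
  !![1, 0,  0, 0, 0,  0,  0, 0;
     0, 0,  0, 0, 3,  0,  0, 7;
     0, 0,  3, 3, 0, 35, 28, 7;
     0, 24, 6, 0, 0, 35, 28, 7;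
     0, 0, 12, 0, 0, 35, 28, 7;
     0, 0, 24, 0, 0, 35, 28, 7;
     0, 0, 48, 0, 0, 35, 28, 7;
     0, 0, 96, 0, 0, 35, 28, 7]

def Bex : Matrix (Fin 6) (Fin 8) ℝ :=
  !![1, 0, 0, 0, 0,  0,  0, 0;
     0, 1, 0, 0, 0,  0,  0, 0;
     0, 0, 1, 0, 0,  0,  0, 0;
     0, 0, 0, 1, 0,  0,  0, 0;
     0, 0, 0, 0, 3,  0,  0, 7;
     0, 0, 0, 0, 0, 35, 28, 7]

theorem Oex_castSucc_vecMul_Aex (k : Fin 7) : Oex k.castSucc ᵥ* Aex = Oex k.succ := by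
  ext j
  fin_cases k <;> fin_cases j <;> simp [Oex, Aex, vecMul, dotProduct, Fin.sum_univ_succ] <;>
    norm_num

theorem range_row_obsMat_ex : Set.range (obsMat 8 1 Aex Cex).row = Set.range Oex.row := by
  rw [range_row_obsMat_fin_one]
  congr 1
  funext k
  exact vecMul_pow_eq_of_vecMul_eq Aex Oex Oex_castSucc_vecMul_Aex k

theorem Oex_eq_mul_Bex :
    Oex = (!![1, 0,  0, 0, 0, 0;
              0, 0,  0, 0, 1, 0;
              0, 0,  3, 3, 0, 1;
              0, 24, 6, 0, 0, 1;
              0, 0, 12, 0, 0, 1;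
              0, 0, 24, 0, 0, 1;
              0, 0, 48, 0, 0, 1;
              0, 0, 96, 0, 0, 1] : Matrix (Fin 8) (Fin 6) ℝ) * Bex := by
  ext i j
  fin_cases i <;> fin_cases j <;> simp [Oex, Bex, mul_apply, Fin.sum_univ_succ]

theorem Bex_eq_mul_Oex :
    Bex = (!![1, 0, 0,   0,     0,     0,    0, 0;
              0, 0, 0,   1/24, -1/16,  1/48, 0, 0;
              0, 0, 0,   0,    -1/12,  1/12, 0, 0;
              0, 0, 1/3, 0,    -7/12,  1/4,  0, 0;
              0, 1, 0,   0,     0,     0,    0, 0;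
              0, 0, 0,   0,     2,    -1,    0, 0] : Matrix (Fin 6) (Fin 8) ℝ) * Oex := by
  ext i j
  fin_cases i <;> fin_cases j <;> norm_num [Oex, Bex, mul_apply, Fin.sum_univ_succ]

theorem Bex_mul_eq_one :
    Bex * (!![1, 0, 0, 0, 0,   0;
              0, 1, 0, 0, 0,   0;
              0, 0, 1, 0, 0,   0;
              0, 0, 0, 1, 0,   0;
              0, 0, 0, 0, 1/3, 0;
              0, 0, 0, 0, 0,   1/35;
              0, 0, 0, 0, 0,   0;
              0, 0, 0, 0, 0,   0] : Matrix (Fin 8) (Fin 6) ℝ) = 1 := by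
  ext i j
  fin_cases i <;> fin_cases j <;> norm_num [Bex, mul_apply, Fin.sum_univ_succ]

theorem Bex_mulVec_eq_zero₁ : Bex *ᵥ ![0, 0, 0, 0, 35, 3, 0, -15] = 0 := by
  ext i
  fin_cases i <;> norm_num [Bex, mulVec, dotProduct, Fin.sum_univ_succ]

theorem Bex_mulVec_eq_zero₂ : Bex *ᵥ ![0, 0, 0, 0, 28, 0, 3, -12] = 0 := by
  ext i
  fin_cases i <;> norm_num [Bex, mulVec, dotProduct, Fin.sum_univ_succ]

theorem single_one_mem_span_range_row_Bex {i : Fin 8} (hi : i ∈ ({0, 1, 2, 3} : Set (Fin 8))) :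
    Pi.single i (1 : ℝ) ∈ Submodule.span ℝ (Set.range Bex.row) := by
  rcases hi with rfl | rfl | rfl | rfl
  exacts [Submodule.subset_span ⟨0, by ext j; fin_cases j <;> simp [Bex]⟩,
    Submodule.subset_span ⟨1, by ext j; fin_cases j <;> simp [Bex]⟩,
    Submodule.subset_span ⟨2, by ext j; fin_cases j <;> simp [Bex]⟩,
    Submodule.subset_span ⟨3, by ext j; fin_cases j <;> simp [Bex]⟩]

theorem single_one_notMem_span_range_row_Bex {i : Fin 8}
    (hi : i ∉ ({0, 1, 2, 3} : Set (Fin 8))) :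
    Pi.single i (1 : ℝ) ∉ Submodule.span ℝ (Set.range Bex.row) := by
  fin_cases i
  any_goals simp at hi
  · exact single_one_notMem_span_range_row Bex_mulVec_eq_zero₁ (by simp)
  · exact single_one_notMem_span_range_row Bex_mulVec_eq_zero₁ (by simp)
  · exact single_one_notMem_span_range_row Bex_mulVec_eq_zero₂ (by simp)
  · exact single_one_notMem_span_range_row Bex_mulVec_eq_zero₁ (by simp)

/-- For the 8-node example, the observability matrix has rank 6, while exactly the four
standard basis vectors `e₁, e₂, e₃, e₄` lie in its row space: the network has exactly four
observable nodes. -/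
theorem stmt_13 :
    (obsMat 8 1 Aex Cex).rank = 6 ∧
    {i : Fin 8 | Pi.single i (1 : ℝ) ∈ Submodule.span ℝ (Set.range (obsMat 8 1 Aex Cex))} =
      ({0, 1, 2, 3} : Set (Fin 8)) := by
  have hspan : Submodule.span ℝ (Set.range (obsMat 8 1 Aex Cex).row) =
      Submodule.span ℝ (Set.range Bex.row) := by
    rw [range_row_obsMat_ex]
    exact span_range_row_eq_of_mul_eq Oex_eq_mul_Bex Bex_eq_mul_Oex
  constructor
  · rw [rank_eq_finrank_span_row, hspan, ← rank_eq_finrank_span_row,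
      rank_eq_card_of_mul_eq_one Bex_mul_eq_one, Fintype.card_fin]
  · ext i
    change Pi.single i 1 ∈ Submodule.span ℝ (Set.range (obsMat 8 1 Aex Cex).row) ↔ _
    rw [hspan]
    exact ⟨not_imp_not.mp single_one_notMem_span_range_row_Bex, single_one_mem_span_range_row_Bex⟩
end
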